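/- arXiv:1710.08646 — 4 statements merged into one kernel-verified Lean document; each statement's English description precedes it below -/
import Mathlib

section
/- For ℓ ≥ 1 and d ≥ ℓ + 4, one has s_{ℓ+1}^{d-ℓ-1} ≤ s_{ℓ+2}^{d-ℓ-2}, where s_i is the i-th Sylvester number. -/
/-!
With `a = s_{ℓ+1}` the recurrence gives `s_{ℓ+2} = a² - a + 1`. Since `a ≥ 2`, already
`a³ ≤ (a² - a + 1)²`, and the remaining `d - ℓ - 4` factors `a ≤ s_{ℓ+2}` are absorbed one by one.
-/

/-- The Sylvester sequence: `s 1 = 2` and `s i = 1 + s 1 * s 2 * ⋯ * s (i-1)` for `i ≥ 2`. -/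
def sylvester : ℕ → ℕ
  | 0 => 2
  | 1 => 2
  | n + 2 => 1 + ∏ i ∈ (Finset.Icc 1 (n + 1)).attach, sylvester i.1
  decreasing_by
    exact Nat.lt_succ_of_le (Finset.mem_Icc.mp i.2).2

lemma Nat.pow_succ_le_pow_of_sq_lt_add {a b k : ℕ} (ha : 2 ≤ a) (hab : a ^ 2 < a + b)
    (hk : 2 ≤ k) : a ^ (k + 1) ≤ b ^ k := by
  obtain ⟨x, rfl⟩ := Nat.exists_eq_add_of_le' ha
  have hb : x ^ 2 + 3 * x + 3 ≤ b := by nlinarith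
  have hcube : (x + 2) ^ 3 ≤ b ^ 2 :=
    calc (x + 2) ^ 3 ≤ (x ^ 2 + 3 * x + 3) ^ 2 := by nlinarith
      _ ≤ b ^ 2 := by gcongr
  have hle : x + 2 ≤ b := by nlinarith
  obtain ⟨j, rfl⟩ := Nat.exists_eq_add_of_le hk
  calc (x + 2) ^ (2 + j + 1) = (x + 2) ^ 3 * (x + 2) ^ j := by ring
    _ ≤ b ^ 2 * b ^ j := by gcongr
    _ = b ^ (2 + j) := by ring

lemma sylvester_succ (n : ℕ) : sylvester (n + 1) = 1 + ∏ i ∈ Finset.Icc 1 n, sylvester i := by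
  cases n with
  | zero => simp [sylvester]
  | succ m => rw [sylvester, Finset.prod_attach]

lemma sylvester_pos (n : ℕ) : 0 < sylvester n := by
  cases n with
  | zero => simp [sylvester]
  | succ m => rw [sylvester_succ]; omega

lemma two_le_sylvester (n : ℕ) : 2 ≤ sylvester n := by
  cases n with
  | zero => simp [sylvester]
  | succ m =>
    have : 0 < ∏ i ∈ Finset.Icc 1 m, sylvester i := Finset.prod_pos fun i _ => sylvester_pos i
    rw [sylvester_succ]
    omega

lemma sylvester_add_two_add (n : ℕ) :
    sylvester (n + 2) + sylvester (n + 1) = sylvester (n + 1) ^ 2 + 1 := by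
  have hprod : sylvester (n + 2) = 1 + (sylvester (n + 1) - 1) * sylvester (n + 1) := by
    rw [sylvester_succ (n + 1), Finset.prod_Icc_succ_top (Nat.le_add_left 1 n), sylvester_succ n,
      Nat.add_sub_cancel_left]
  have := two_le_sylvester (n + 1)
  zify [this.trans' one_le_two] at hprod ⊢
  rw [hprod]
  ring

theorem sylvester_pow_mono_general (ℓ d : ℕ) (hd : ℓ + 4 ≤ d) :
    sylvester (ℓ + 1) ^ (d - ℓ - 1) ≤ sylvester (ℓ + 2) ^ (d - ℓ - 2) := by
  rw [show d - ℓ - 1 = d - ℓ - 2 + 1 by omega]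
  refine Nat.pow_succ_le_pow_of_sq_lt_add (two_le_sylvester _) ?_ (by omega)
  have := sylvester_add_two_add ℓ
  omega

theorem sylvester_pow_mono (ℓ d : ℕ) (hℓ : 1 ≤ ℓ) (hd : ℓ + 4 ≤ d) :
    sylvester (ℓ + 1) ^ (d - ℓ - 1) ≤ sylvester (ℓ + 2) ^ (d - ℓ - 2) :=
  sylvester_pow_mono_general ℓ d hd
end

section
/- Let β = (β_1, …, β_{d+1}) be a feasible solution of the optimization problem, i.e., β_1 ≥ β_2 ≥ ⋯ ≥ β_{d+1} ≥ 0, β_1 + ⋯ + β_{d+1} = 1, and for every t ∈ [d] the product-sum inequality ∏_{i=1}^t (β_i - β_{d+1}) ≤ ∑_{j=t+1}^{d+1} (β_j - β_{d+1}) + (d+1) β_{d+1} holds. Then β_t > 0 for every t ∈ [d+1]. -/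
/-! If the last weight `β (d + 1)` is positive, monotonicity makes every weight positive. If it
vanishes, the product-sum inequalities read `∏_{i ≤ t} β i ≤ ∑_{j > t} β j`, and together with
`∑ β = 1` (the case `t = 0`, an empty product) they propagate positivity upwards: once
`β 1, …, β t` are positive the tail sum after `t` is positive, so some later weight, hence also
the larger `β (t + 1)`, is positive. -/

open Finset

lemma pos_of_sum_Icc_pos_of_antitoneOn {f : ℕ → ℝ} {a b : ℕ}
    (hf : AntitoneOn f (Set.Icc a b)) (hsum : 0 < ∑ j ∈ Icc a b, f j) : 0 < f a := by
  obtain ⟨j, hj, hfj⟩ := exists_lt_of_sum_lt (f := fun _ ↦ (0 : ℝ)) (by simpa using hsum)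
  have hj' := mem_Icc.mp hj
  exact hfj.trans_le <| hf ⟨le_rfl, hj'.1.trans hj'.2⟩ (Set.mem_Icc.mpr hj') hj'.1

lemma forall_pos_of_prod_le_tail_sum {f : ℕ → ℝ} {n : ℕ} (hf : AntitoneOn f (Set.Icc 1 n))
    (hprod : ∀ t < n, ∏ i ∈ Icc 1 t, f i ≤ ∑ j ∈ Icc (t + 1) n, f j) :
    ∀ t ∈ Icc 1 n, 0 < f t := by
  suffices key : ∀ t ≤ n, ∀ i ∈ Icc 1 t, 0 < f i from fun t ht ↦ key n le_rfl t ht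
  intro t
  induction t with
  | zero => simp
  | succ t ih =>
    intro ht i hi
    obtain ⟨hi1, hit⟩ := mem_Icc.mp hi
    rcases hit.lt_or_eq with hlt | rfl
    · exact ih (by omega) i (mem_Icc.mpr ⟨hi1, by omega⟩)
    have hprod_pos : 0 < ∏ i ∈ Icc 1 t, f i := prod_pos (ih (by omega))
    exact pos_of_sum_Icc_pos_of_antitoneOn (hf.mono (Set.Icc_subset_Icc_left (by omega)))
      (hprod_pos.trans_le (hprod t (by omega)))

lemma antitoneOn_Icc_of_succ_le {f : ℕ → ℝ} {n : ℕ}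
    (h : ∀ t, 1 ≤ t → t ≤ n → f (t + 1) ≤ f t) : AntitoneOn f (Set.Icc 1 (n + 1)) :=
  antitoneOn_of_add_one_le Set.ordConnected_Icc fun t _ ht ht' ↦
    h t ht.1 (Nat.le_of_add_le_add_right ht'.2)

theorem feasible_all_pos_general (d : ℕ) (β : ℕ → ℝ)
    (hord : ∀ t, 1 ≤ t → t ≤ d → β (t + 1) ≤ β t)
    (hnn : 0 ≤ β (d + 1))
    (hsum : ∑ i ∈ Finset.Icc 1 (d + 1), β i = 1)
    (hPS : ∀ t ∈ Finset.Icc 1 d,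
      ∏ i ∈ Finset.Icc 1 t, (β i - β (d + 1)) ≤
        (∑ j ∈ Finset.Icc (t + 1) (d + 1), (β j - β (d + 1))) + ((d : ℝ) + 1) * β (d + 1)) :
    ∀ t ∈ Finset.Icc 1 (d + 1), 0 < β t := by
  have hanti := antitoneOn_Icc_of_succ_le hord
  rcases hnn.lt_or_eq with hpos | hzero
  · intro t ht
    have ht' := mem_Icc.mp ht
    exact hpos.trans_le (hanti (Set.mem_Icc.mpr ht') ⟨by omega, le_rfl⟩ ht'.2)
  refine forall_pos_of_prod_le_tail_sum hanti fun t ht ↦ ?_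
  rcases t.eq_zero_or_pos with rfl | ht0
  · simp [hsum]
  · simpa [← hzero] using hPS t (mem_Icc.mpr ⟨ht0, by omega⟩)

theorem feasible_all_pos (d : ℕ) (hd : 1 ≤ d) (β : ℕ → ℝ)
    (hord : ∀ t, 1 ≤ t → t ≤ d → β (t + 1) ≤ β t)
    (hnn : 0 ≤ β (d + 1))
    (hsum : ∑ i ∈ Finset.Icc 1 (d + 1), β i = 1)
    (hPS : ∀ t ∈ Finset.Icc 1 d,
      ∏ i ∈ Finset.Icc 1 t, (β i - β (d + 1)) ≤
        (∑ j ∈ Finset.Icc (t + 1) (d + 1), (β j - β (d + 1))) + ((d : ℝ) + 1) * β (d + 1)) :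
    ∀ t ∈ Finset.Icc 1 (d + 1), 0 < β t :=
  feasible_all_pos_general d β hord hnn hsum hPS
end

section
/- Let β = (β_1, …, β_{d+1}) satisfy β_1 ≥ ⋯ ≥ β_{d+1} > 0, β_1 + ⋯ + β_{d+1} = 1, and the product-sum inequalities ∏_{i=1}^t (β_i - β_{d+1}) ≤ ∑_{j=t+1}^{d+1} (β_j - β_{d+1}) + (d+1) β_{d+1} for all t ∈ [d]. Then for every t ∈ [d], either β_t > β_{t+1} (the ordering inequality is strict) or the product-sum inequality PS(t) is strict. -/
/-! Subtract `c = β (d + 1)`: the ordering makes every `β i - c` lie in `[0, 1]`, so the product of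
the first `t` of them is at most the last factor `β t - c`. If `β t = β (t + 1)`, this factor is one
of the summands on the right-hand side of `PS(t)`, whose other terms are nonnegative and whose last
term `(d + 1) c` is positive. -/

theorem Finset.prod_le_of_mem {ι R : Type*} [CommSemiring R] [PartialOrder R] [IsOrderedRing R]
    {s : Finset ι} {f : ι → R} {a : ι} (ha : a ∈ s) (h0 : ∀ i ∈ s, 0 ≤ f i)
    (h1 : ∀ i ∈ s, f i ≤ 1) : ∏ i ∈ s, f i ≤ f a := by
  classical
  rw [← Finset.mul_prod_erase s f ha]
  exact mul_le_of_le_one_right (h0 a ha) <|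
    Finset.prod_le_one (fun i hi ↦ h0 i (Finset.mem_of_mem_erase hi))
      (fun i hi ↦ h1 i (Finset.mem_of_mem_erase hi))

theorem antitoneOn_Icc_of_succ_le_s9 {α : Type*} [Preorder α] {f : ℕ → α} {m n : ℕ}
    (hf : ∀ k, m ≤ k → k < n → f (k + 1) ≤ f k) : AntitoneOn f (Set.Icc m n) :=
  antitoneOn_of_succ_le Set.ordConnected_Icc fun k _ hk hk' ↦ hf k hk.1 (Nat.lt_of_succ_le hk'.2)

theorem feasible_ord_or_ps_strict_general (d : ℕ) (β : ℕ → ℝ)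
    (hord : ∀ t, 1 ≤ t → t ≤ d → β (t + 1) ≤ β t)
    (hpos : 0 < β (d + 1))
    (hsum : ∑ i ∈ Finset.Icc 1 (d + 1), β i = 1) :
    ∀ t ∈ Finset.Icc 1 d,
      β (t + 1) < β t ∨
      ∏ i ∈ Finset.Icc 1 t, (β i - β (d + 1)) <
        (∑ j ∈ Finset.Icc (t + 1) (d + 1), (β j - β (d + 1))) + ((d : ℝ) + 1) * β (d + 1) := by
  intro t ht
  obtain ⟨ht1, htd⟩ := Finset.mem_Icc.mp ht
  rcases (hord t ht1 htd).lt_or_eq with hlt | heq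
  · exact .inl hlt
  right
  have hanti : AntitoneOn β (Set.Icc 1 (d + 1)) :=
    antitoneOn_Icc_of_succ_le_s9 fun k hk hkd ↦ hord k hk (Nat.lt_succ_iff.mp hkd)
  have hge : ∀ i ∈ Finset.Icc 1 (d + 1), β (d + 1) ≤ β i := fun i hi ↦
    hanti (by simpa using hi) ⟨by omega, le_rfl⟩ (Finset.mem_Icc.mp hi).2
  have hle : ∀ i ∈ Finset.Icc 1 (d + 1), β i ≤ 1 := fun i hi ↦
    hsum ▸ Finset.single_le_sum (fun j hj ↦ hpos.le.trans (hge j hj)) hi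
  have hsub : Finset.Icc 1 t ⊆ Finset.Icc 1 (d + 1) := Finset.Icc_subset_Icc le_rfl (by omega)
  calc ∏ i ∈ Finset.Icc 1 t, (β i - β (d + 1))
      ≤ β t - β (d + 1) :=
        Finset.prod_le_of_mem (Finset.mem_Icc.mpr ⟨ht1, le_rfl⟩)
          (fun i hi ↦ sub_nonneg.mpr (hge i (hsub hi)))
          (fun i hi ↦ by linarith [hle i (hsub hi)])
    _ = β (t + 1) - β (d + 1) := by rw [heq]
    _ ≤ ∑ j ∈ Finset.Icc (t + 1) (d + 1), (β j - β (d + 1)) :=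
        Finset.single_le_sum (fun j hj ↦ sub_nonneg.mpr (hge j (by simp at hj ⊢; omega)))
          (Finset.mem_Icc.mpr ⟨le_rfl, by omega⟩)
    _ < _ := lt_add_of_pos_right _ (by positivity)

theorem feasible_ord_or_ps_strict (d : ℕ) (hd : 1 ≤ d) (β : ℕ → ℝ)
    (hord : ∀ t, 1 ≤ t → t ≤ d → β (t + 1) ≤ β t)
    (hpos : 0 < β (d + 1))
    (hsum : ∑ i ∈ Finset.Icc 1 (d + 1), β i = 1)
    (hPS : ∀ t ∈ Finset.Icc 1 d,
      ∏ i ∈ Finset.Icc 1 t, (β i - β (d + 1)) ≤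
        (∑ j ∈ Finset.Icc (t + 1) (d + 1), (β j - β (d + 1))) + ((d : ℝ) + 1) * β (d + 1)) :
    ∀ t ∈ Finset.Icc 1 d,
      β (t + 1) < β t ∨
      ∏ i ∈ Finset.Icc 1 t, (β i - β (d + 1)) <
        (∑ j ∈ Finset.Icc (t + 1) (d + 1), (β j - β (d + 1))) + ((d : ℝ) + 1) * β (d + 1) :=
  feasible_ord_or_ps_strict_general d β hord hpos hsum
end

section
/- For d ≥ 4, the function g(α) = (1/(s_{d-1} - 1)) · (1/(s_{d-1} - 1) - dα) · α satisfies g(α) ≥ 1/((d+1)(s_d - 1)^2) for all α in the interval [1/((d+1)(s_d - 1)), 1/((d+1)(s_{d-1} - 1))]. -/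
open Set

lemma sylvester_add_two_eq_one_add_prod (n : ℕ) :
    sylvester (n + 2) = 1 + ∏ i ∈ Finset.Icc 1 (n + 1), sylvester i := by
  rw [sylvester, Finset.prod_attach]

lemma sylvester_add_two_eq_one_add_mul (n : ℕ) :
    sylvester (n + 2) = 1 + sylvester (n + 1) * (sylvester (n + 1) - 1) := by
  match n with
  | 0 => simp [sylvester_add_two_eq_one_add_prod, sylvester]
  | m + 1 =>
    have hprod : ∏ i ∈ Finset.Icc 1 (m + 1), sylvester i = sylvester (m + 2) - 1 := by
      rw [sylvester_add_two_eq_one_add_prod]; omega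
    rw [sylvester_add_two_eq_one_add_prod (m + 1), Finset.prod_Icc_succ_top (by omega), hprod,
      Nat.sub_mul, Nat.mul_sub, one_mul, mul_one]

lemma succ_le_sylvester (n : ℕ) : n + 1 ≤ sylvester n := by
  induction n with
  | zero => simp [sylvester]
  | succ n ih =>
    match n with
    | 0 => simp [sylvester]
    | m + 1 =>
      rw [sylvester_add_two_eq_one_add_mul]
      have : m + 2 ≤ sylvester (m + 1) * (sylvester (m + 1) - 1) :=
        le_mul_of_le_of_one_le ih (by omega)
      omega

lemma sylvester_add_two_sub_one (n : ℕ) :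
    (sylvester (n + 2) : ℝ) - 1 = ((sylvester (n + 1) : ℝ) - 1) * sylvester (n + 1) := by
  have h := succ_le_sylvester (n + 1)
  rw [sylvester_add_two_eq_one_add_mul]
  push_cast [Nat.cast_sub (by omega : 1 ≤ sylvester (n + 1))]
  ring

lemma concaveOn_mul_sub_mul_sq {𝕜 : Type*} [Field 𝕜] [LinearOrder 𝕜] [IsStrictOrderedRing 𝕜]
    (a : 𝕜) {b : 𝕜} (hb : 0 ≤ b) : ConcaveOn 𝕜 univ fun x ↦ a * x - b * x ^ 2 :=
  ((LinearMap.mul 𝕜 𝕜 a).concaveOn convex_univ).sub (even_two.convexOn_pow.smul hb)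

section

variable {t D : ℝ}

lemma concaveOn_quadratic (ht : 0 < t) (hD : 0 ≤ D) :
    ConcaveOn ℝ univ fun x ↦ 1 / t * (1 / t - D * x) * x :=
  (concaveOn_mul_sub_mul_sq (1 / t ^ 2) (div_nonneg hD ht.le)).congr fun x _ ↦ by
    dsimp only
    ring

lemma one_div_le_quadratic_left (ht : 0 < t) (hD : 0 ≤ D) :
    1 / ((D + 1) * (t * (t + 1)) ^ 2) ≤
      1 / t * (1 / t - D * (1 / ((D + 1) * (t * (t + 1))))) * (1 / ((D + 1) * (t * (t + 1)))) :=
  calc 1 / ((D + 1) * (t * (t + 1)) ^ 2)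
      = (D + 1) * t / ((D + 1) ^ 2 * t ^ 3 * (t + 1) ^ 2) := by field_simp
    _ ≤ ((D + 1) * t + 1) / ((D + 1) ^ 2 * t ^ 3 * (t + 1) ^ 2) := by gcongr; linarith
    _ = _ := by field_simp; ring

lemma one_div_le_quadratic_right (ht : 0 < t) (hD : 0 ≤ D) (hDt : D ≤ t + 1) :
    1 / ((D + 1) * (t * (t + 1)) ^ 2) ≤
      1 / t * (1 / t - D * (1 / ((D + 1) * t))) * (1 / ((D + 1) * t)) :=
  calc 1 / ((D + 1) * (t * (t + 1)) ^ 2)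
      = (D + 1) * t / ((D + 1) ^ 2 * t ^ 3 * (t + 1) ^ 2) := by field_simp
    _ ≤ (t + 1) ^ 2 / ((D + 1) ^ 2 * t ^ 3 * (t + 1) ^ 2) := by gcongr; nlinarith
    _ = _ := by field_simp; ring

end

theorem quadratic_lower_bound (d : ℕ) (hd : 4 ≤ d) (α : ℝ)
    (hα1 : 1 / (((d : ℝ) + 1) * ((sylvester d : ℝ) - 1)) ≤ α)
    (hα2 : α ≤ 1 / (((d : ℝ) + 1) * ((sylvester (d - 1) : ℝ) - 1))) :
    1 / ((sylvester (d - 1) : ℝ) - 1) * (1 / ((sylvester (d - 1) : ℝ) - 1) - (d : ℝ) * α) * α ≥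
      1 / (((d : ℝ) + 1) * ((sylvester d : ℝ) - 1) ^ 2) := by
  obtain ⟨n, rfl⟩ : ∃ n, d = n + 2 := ⟨d - 2, by omega⟩
  rw [show n + 2 - 1 = n + 1 from rfl] at hα2 ⊢
  have hs : n + 2 ≤ sylvester (n + 1) := succ_le_sylvester (n + 1)
  have hrec : (sylvester (n + 2) : ℝ) - 1 =
      ((sylvester (n + 1) : ℝ) - 1) * ((sylvester (n + 1) : ℝ) - 1 + 1) := by
    rw [sylvester_add_two_sub_one, sub_add_cancel]
  have ht : 0 < (sylvester (n + 1) : ℝ) - 1 := by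
    rw [sub_pos]; exact_mod_cast (by omega : 1 < sylvester (n + 1))
  have hDt : ((n + 2 : ℕ) : ℝ) ≤ (sylvester (n + 1) : ℝ) - 1 + 1 := by
    rw [sub_add_cancel]; exact_mod_cast hs
  have hD : 0 ≤ ((n + 2 : ℕ) : ℝ) := Nat.cast_nonneg _
  rw [hrec] at hα1 ⊢
  generalize (sylvester (n + 1) : ℝ) - 1 = t at *
  generalize ((n + 2 : ℕ) : ℝ) = D at *
  exact (le_min (one_div_le_quadratic_left ht hD) (one_div_le_quadratic_right ht hD hDt)).trans
    ((concaveOn_quadratic ht hD).min_le_of_mem_Icc trivial trivial ⟨hα1, hα2⟩)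
end
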